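/- Let F : C → D be an additive functor between preadditive categories. Then the induced functor Cau(F) : Cau(C) → Cau(D) between Cauchy completions is an equivalence of categories if and only if F is fully faithful and every object of D is a retract of a finite biproduct of objects in the essential image of F (i.e., arises as the splitting of an idempotent supported on a finite direct sum of objects F(X₁) ⊕ … ⊕ F(Xₙ)). -/

import Mathlib

open CategoryTheory CategoryTheory.Idempotents CategoryTheory.Limits

/-! Cau(F) restricts to F along the fully faithful embeddings `C ⥤ Cau(C)` and `D ⥤ Cau(D)`,
so Cau(F) fully faithful forces F fully faithful; conversely Cau(F) is fully faithful whenever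
F is. Every object of Cau(D) is a retract of the image of a single object `⨁ Xᵢ` of `D`, and the
essential image of a fully faithful additive functor out of the idempotent complete additive
category Cau(C) is closed under finite biproducts and retracts. Hence Cau(F) is essentially
surjective exactly when every object of `D` is a retract of some `⨁ F(Xᵢ)`. -/

/-- The functor `Kar(G) : Kar(C') ⥤ Kar(D')` induced by a functor `G : C' ⥤ D'`,
sending `(X, p)` to `(G(X), G(p))`. -/
def karMap {C' D' : Type*} [Category C'] [Category D'] (G : C' ⥤ D') :
    Karoubi C' ⥤ Karoubi D' where
  obj M := ⟨G.obj M.X, G.map M.p, by rw [← G.map_comp, M.idem]⟩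
  map f := ⟨G.map f.f, by simp only [← G.map_comp, Karoubi.p_comp, Karoubi.comp_p]⟩
  map_id M := by
    apply Karoubi.hom_ext
    simp [Karoubi.id_f]
  map_comp f g := by
    apply Karoubi.hom_ext
    simp

/-- The functor `Cau(F) : Cau(C) ⥤ Cau(D)` induced by an additive functor `F : C ⥤ D`
on Cauchy completions `Cau(C) = Kar(Mat(C))`. -/
noncomputable def cauMap {C : Type u₁} [Category.{v₁} C] [Preadditive C]
    {D : Type u₂} [Category.{v₁} D] [Preadditive D]
    (F : C ⥤ D) [F.Additive] : Karoubi (Mat_ C) ⥤ Karoubi (Mat_ D) :=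
  karMap F.mapMat_

namespace CategoryTheory

section EssentialImage

variable {A B : Type*} [Category A] [Category B]

noncomputable def Retract.preimage (E : A ⥤ B) [E.Full] [E.Faithful] {X Y : A}
    (h : Retract (E.obj X) (E.obj Y)) : Retract X Y where
  i := E.preimage h.i
  r := E.preimage h.r
  retract := E.map_injective (by simp)

/-- A retract of `E.obj N` and the image of a splitting in `A` of the idempotent
`E.preimage (r ≫ i)` of `N` both split `r ≫ i`, hence are isomorphic. -/
instance Functor.essImage_isStableUnderRetracts (E : A ⥤ B) [E.Full] [E.Faithful]
    [IsIdempotentComplete A] : E.essImage.IsStableUnderRetracts where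
  of_retract {X Y} h hY := by
    obtain ⟨N, ⟨e⟩⟩ := hY
    let h' : Retract X (E.obj N) := h.trans (Retract.ofIso e.symm)
    let q := E.preimage (h'.r ≫ h'.i)
    have hq : q ≫ q = q := E.map_injective (by simp [q, h'.retract_assoc])
    obtain ⟨Z, i, p, hip, hpi⟩ := IsIdempotentComplete.idempotents_split N q hq
    have hri : h'.r ≫ h'.i = E.map p ≫ E.map i := by rw [← E.map_comp, hpi, E.map_preimage]
    refine ⟨Z, ⟨⟨E.map i ≫ h'.r, h'.i ≫ E.map p, ?_, ?_⟩⟩⟩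
    · rw [Category.assoc, reassoc_of% hri]
      simp only [← E.map_comp, hip, E.map_id, Category.comp_id]
    · rw [Category.assoc, ← reassoc_of% hri]
      simp

lemma Functor.biproduct_mem_essImage [Preadditive A] [Preadditive B] [HasFiniteBiproducts A]
    (E : A ⥤ B) [E.Additive] {J : Type} [Finite J] {f : J → B} [HasBiproduct f]
    (hf : ∀ j, E.essImage (f j)) : E.essImage (⨁ f) := by
  choose g hg using hf
  have := Fintype.ofFinite J
  exact ⟨⨁ g, ⟨E.mapBiproduct g ≪≫ biproduct.mapIso fun j => (hg j).some⟩⟩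

end EssentialImage

section Mat

variable {C : Type*} [Category C] [Preadditive C]

noncomputable def Mat_.isoEmbeddingBiproduct [HasFiniteBiproducts C] (M : Mat_ C) :
    M ≅ (Mat_.embedding C).obj (⨁ M.X) :=
  Mat_.isoBiproductEmbedding M ≪≫ ((Mat_.embedding C).mapBiproduct M.X).symm

variable {D : Type*} [Category D] [Preadditive D] (F : C ⥤ D) [F.Additive]

instance [F.Faithful] : F.mapMat_.Faithful where
  map_injective h := funext₂ fun i j => F.map_injective (congr_fun₂ h i j)

instance [F.Full] : F.mapMat_.Full where
  map_surjective g :=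
    ⟨fun i j => F.preimage (g i j), funext₂ fun i j => F.map_preimage (g i j)⟩

instance : F.mapMat_.Additive where
  map_add := funext₂ fun _ _ => F.map_add

end Mat

end CategoryTheory

section Karoubi

variable {C' D' : Type*} [Category C'] [Category D'] (G : C' ⥤ D')

@[simp] lemma karMap_obj_X (P : Karoubi C') : ((karMap G).obj P).X = G.obj P.X := rfl

@[simp] lemma karMap_obj_p (P : Karoubi C') : ((karMap G).obj P).p = G.map P.p := rfl

@[simp] lemma karMap_map_f {P Q : Karoubi C'} (f : P ⟶ Q) :
    ((karMap G).map f).f = G.map f.f := rfl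

instance [G.Faithful] : (karMap G).Faithful where
  map_injective h := Karoubi.hom_ext _ _ (G.map_injective (congrArg Karoubi.Hom.f h))

instance [G.Full] : (karMap G).Full where
  map_surjective {P Q} g := by
    obtain ⟨h, hh⟩ := G.map_surjective (X := P.X) (Y := Q.X) g.f
    refine ⟨⟨P.p ≫ h ≫ Q.p, by simp [reassoc_of% P.idem]⟩, ?_⟩
    ext
    simpa [hh] using g.comm

instance [Preadditive C'] [Preadditive D'] [G.Additive] : (karMap G).Additive where
  map_add := Karoubi.hom_ext _ _ G.map_add

def toKaroubiCompKarMapIso : toKaroubi C' ⋙ karMap G ≅ G ⋙ toKaroubi D' :=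
  NatIso.ofComponents
    (fun _ => { hom := ⟨𝟙 _, by simp⟩, inv := ⟨𝟙 _, by simp⟩ })
    (fun _ => by ext; simp)

end Karoubi

noncomputable abbrev cauEmbedding (C : Type*) [Category C] [Preadditive C] :
    C ⥤ Karoubi (Mat_ C) :=
  Mat_.embedding C ⋙ toKaroubi (Mat_ C)

section Cau

universe v u₁ u₂

variable {C : Type u₁} [Category.{v} C] [Preadditive C] {D : Type u₂} [Category.{v} D]
  [Preadditive D] (F : C ⥤ D) [F.Additive]

instance [F.Faithful] : (cauMap F).Faithful := inferInstanceAs (karMap F.mapMat_).Faithful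

instance [F.Full] : (cauMap F).Full := inferInstanceAs (karMap F.mapMat_).Full

instance : (cauMap F).Additive := inferInstanceAs (karMap F.mapMat_).Additive

noncomputable def cauEmbeddingCompCauMapIso :
    cauEmbedding C ⋙ cauMap F ≅ F ⋙ cauEmbedding D :=
  Functor.isoWhiskerLeft (Mat_.embedding C) (toKaroubiCompKarMapIso F.mapMat_)

variable [HasFiniteBiproducts D]

noncomputable def retractCauEmbeddingBiproduct (Q : Karoubi (Mat_ D)) :
    Retract Q ((cauEmbedding D).obj (⨁ Q.X.X)) :=
  (Karoubi.retract Q).trans (Retract.ofIso ((toKaroubi _).mapIso Q.X.isoEmbeddingBiproduct))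

lemma exists_retract_biproduct_of_cauMap_essSurj [(cauMap F).EssSurj] (Y : D) :
    ∃ (n : ℕ) (X : Fin n → C), Nonempty (Retract Y (⨁ fun i => F.obj (X i))) := by
  let N := (cauMap F).objPreimage ((cauEmbedding D).obj Y)
  let e : Fin _ ≃ N.X.ι := (Fintype.equivFin N.X.ι).symm
  have hN : Retract Y (⨁ fun i => F.obj (N.X.X i)) := Retract.preimage (cauEmbedding D) <|
    (Retract.ofIso ((cauMap F).objObjPreimageIso _).symm).trans
      (retractCauEmbeddingBiproduct ((cauMap F).obj N))
  exact ⟨_, N.X.X ∘ e,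
    ⟨hN.trans (Retract.ofIso (biproduct.whiskerEquiv e fun _ => Iso.refl _).symm)⟩⟩

lemma cauMap_essSurj [F.Full] [F.Faithful]
    (hF : ∀ Y : D, ∃ (n : ℕ) (X : Fin n → C),
      Nonempty (Retract Y (⨁ fun i => F.obj (X i)))) :
    (cauMap F).EssSurj := by
  let P := (cauMap F).essImage
  have hFX (X : C) : P ((cauEmbedding D).obj (F.obj X)) :=
    ⟨(cauEmbedding C).obj X, ⟨(cauEmbeddingCompCauMapIso F).app X⟩⟩
  have hY (Y : D) : P ((cauEmbedding D).obj Y) := by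
    obtain ⟨n, X, ⟨h⟩⟩ := hF Y
    have hsum : P (⨁ fun i => (cauEmbedding D).obj (F.obj (X i))) :=
      Functor.biproduct_mem_essImage _ fun i => hFX (X i)
    exact P.prop_of_retract (h.map (cauEmbedding D))
      (P.prop_of_iso ((cauEmbedding D).mapBiproduct _).symm hsum)
  exact ⟨fun Q => P.prop_of_retract (retractCauEmbeddingBiproduct Q) (hY _)⟩

end Cau

/-- `Cau(F)` is an equivalence if and only if `F` is fully faithful and every object
of `D` is a retract of a finite biproduct of objects in the image of `F`. -/
theorem cauMap_isEquivalence_iff {C : Type u₁} [Category.{v₁} C] [Preadditive C]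
    {D : Type u₂} [Category.{v₁} D] [Preadditive D] [HasFiniteBiproducts D]
    (F : C ⥤ D) [F.Additive] :
    (cauMap F).IsEquivalence ↔
      (F.Full ∧ F.Faithful ∧
        ∀ Y : D, ∃ (n : ℕ) (X : Fin n → C)
          (r : (⨁ fun i => F.obj (X i)) ⟶ Y) (s : Y ⟶ ⨁ fun i => F.obj (X i)),
            s ≫ r = 𝟙 Y) := by
  constructor
  · intro _
    refine ⟨Functor.Full.of_comp_faithful_iso (cauEmbeddingCompCauMapIso F).symm,
      Functor.Faithful.of_comp_iso (cauEmbeddingCompCauMapIso F).symm, fun Y => ?_⟩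
    obtain ⟨n, X, ⟨h⟩⟩ := exists_retract_biproduct_of_cauMap_essSurj F Y
    exact ⟨n, X, h.r, h.i, h.retract⟩
  · rintro ⟨_, _, hF⟩
    have := cauMap_essSurj F fun Y =>
      let ⟨n, X, r, s, h⟩ := hF Y
      ⟨n, X, ⟨⟨s, r, h⟩⟩⟩
    exact { }
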